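/- arXiv:2604.02086 — 4 statements merged into one kernel-verified Lean document; each statement's English description precedes it below -/
import Mathlib

section
/- Let C be a longest cycle of a graph G, and let u, v be two vertices of G not on C. Then |C| ≥ 2·|N_C(u) ∪ N_C(v)| − 2, where N_C(x) denotes the set of neighbors of x lying on C. -/
open SimpleGraph

/-- `G` contains `H` as a (not necessarily induced) subgraph. -/
def Contains {V W : Type*} (G : SimpleGraph V) (H : SimpleGraph W) : Prop :=
  ∃ f : H →g G, Function.Injective f

/-- `G` has a cycle with `m` vertices (equivalently, of length `m`). -/
def HasCycleLength {V : Type*} (G : SimpleGraph V) (m : ℕ) : Prop :=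
  ∃ (v : V) (c : G.Walk v v), c.IsCycle ∧ c.length = m

/-- The Ramsey property for `K_{a,b}` versus the cycle `C_m`: every graph `Γ` on `N` vertices
contains `K_{a,b}`, or its complement contains a cycle of length `m`. -/
def RamseyProp (a b m N : ℕ) : Prop :=
  ∀ Γ : SimpleGraph (Fin N),
    Contains Γ (completeBipartiteGraph (Fin a) (Fin b)) ∨ HasCycleLength Γᶜ m

/-- `G` is `k`-connected. -/
def IsKConnected {V : Type*} [Fintype V] (k : ℕ) (G : SimpleGraph V) : Prop :=
  k < Fintype.card V ∧
    ∀ S : Finset V, S.card < k → (G.induce ((↑S : Set V)ᶜ)).Connected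

/-- The circumference of `G`: the length of a longest cycle. -/
noncomputable def circumference {V : Type*} (G : SimpleGraph V) : ℕ :=
  sSup {m | HasCycleLength G m}

/-!
Number the cycle `C` by `ZMod n` and let `S` be the set of positions whose vertex is adjacent
to `u` or `v`. Since `S` and its shift `S + 1` both lie in `ZMod n`, `2 |S| ≤ n + |S ∩ (S + 1)|`.
If `i, i + 1 ∈ S`, maximality of `C` forbids one outside vertex adjacent to both (it could be
inserted between them), so `u ~ C i, v ~ C (i + 1)` or the other way round. Two distinct
positions `a ≠ b` of the first kind give the longer cycle
`u, C a, C (a - 1), …, C (b + 1), v, C (a + 1), …, C b, u`, and likewise for the second kind;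
hence `|S ∩ (S + 1)| ≤ 2`.
-/

open Finset Function

lemma Finset.two_mul_card_le_card_add_card_filter_apply_mem {α : Type*} [Fintype α]
    [DecidableEq α] (σ : Equiv.Perm α) (S : Finset α) :
    2 * #S ≤ Fintype.card α + #{x ∈ S | σ x ∈ S} := by
  have hinter : S ∩ S.map σ.toEmbedding = {x ∈ S | σ x ∈ S}.map σ.toEmbedding := by
    ext x
    simp only [mem_inter, mem_map_equiv, mem_filter, Equiv.apply_symm_apply]
    exact and_comm
  calc 2 * #S = #(S ∪ S.map σ.toEmbedding) + #(S ∩ S.map σ.toEmbedding) := by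
        rw [card_union_add_card_inter, card_map, two_mul]
    _ ≤ Fintype.card α + #{x ∈ S | σ x ∈ S} := by
        rw [hinter, card_map]
        exact Nat.add_le_add_right (card_le_univ _) _

lemma ZMod.natCast_injOn_Iio (n : ℕ) : Set.InjOn (Nat.cast : ℕ → ZMod n) (Set.Iio n) := by
  intro s hs t ht hst
  rwa [ZMod.natCast_eq_natCast_iff', Nat.mod_eq_of_lt hs, Nat.mod_eq_of_lt ht] at hst

namespace SimpleGraph

variable {V : Type*} {G : SimpleGraph V}

namespace Walk

def ofAdjSeq (p : ℕ → V) (hp : ∀ i, G.Adj (p i) (p (i + 1))) : (k : ℕ) → G.Walk (p 0) (p k)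
  | 0 => nil
  | k + 1 => (ofAdjSeq p hp k).concat (hp k)

variable {p : ℕ → V} (hp : ∀ i, G.Adj (p i) (p (i + 1)))

@[simp]
lemma length_ofAdjSeq (k : ℕ) : (ofAdjSeq p hp k).length = k := by
  induction k with
  | zero => rfl
  | succ k ih => simp [ofAdjSeq, ih]

lemma support_ofAdjSeq (k : ℕ) : (ofAdjSeq p hp k).support = (List.range (k + 1)).map p := by
  induction k with
  | zero => rfl
  | succ k ih => simp [ofAdjSeq, ih, List.range_succ]

lemma isPath_ofAdjSeq {k : ℕ} (hinj : Set.InjOn p (Set.Iic k)) : (ofAdjSeq p hp k).IsPath := by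
  rw [isPath_def, support_ofAdjSeq]
  refine List.Nodup.map_on (fun x hx y hy hxy => hinj ?_ ?_ hxy) List.nodup_range <;>
    simp_all

variable {u x y x' y' : V}

lemma IsPath.isCycle_cons_concat {q : G.Walk x y} (hq : q.IsPath) (hxy : x ≠ y)
    (hu : u ∉ q.support) (hx : G.Adj u x) (hy : G.Adj y u) : (cons hx (q.concat hy)).IsCycle := by
  rw [isCycle_iff_isPath_tail_and_le_length]
  refine ⟨by simpa using hq.concat hu hy, ?_⟩
  have : q.length ≠ 0 := fun h => hxy (eq_of_length_eq_zero h)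
  simp only [length_cons, length_concat]
  omega

lemma IsPath.concat_append_cons {q : G.Walk x y} {r : G.Walk x' y'} (hq : q.IsPath)
    (hr : r.IsPath) (hqr : q.support.Disjoint r.support) (huq : u ∉ q.support)
    (hur : u ∉ r.support) (hy : G.Adj y u) (hx' : G.Adj u x') :
    ((q.concat hy).append (cons hx' r)).IsPath := by
  rw [isPath_def] at *
  simp only [support_append, support_concat, support_cons, List.tail_cons,
    List.nodup_append, List.nodup_cons, List.mem_append, List.mem_singleton]
  refine ⟨⟨hq, by simp, ?_⟩, hr, ?_⟩
  · rintro a ha _ rfl rfl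
    exact huq ha
  · rintro a (ha | rfl) b hb rfl
    exacts [hqr ha hb, hur hb]

lemma IsCycle.injective_getVert_val {w : V} {c : G.Walk w w} [NeZero c.length]
    (hc : c.IsCycle) : Injective fun i : ZMod c.length => c.getVert i.val := by
  intro i j hij
  exact ZMod.val_injective _
    (hc.getVert_injOn' (Nat.le_sub_one_of_lt i.val_lt) (Nat.le_sub_one_of_lt j.val_lt) hij)

variable {w : V} (c : G.Walk w w) [NeZero c.length]

lemma adj_getVert_val_add_one (i : ZMod c.length) :
    G.Adj (c.getVert i.val) (c.getVert (i + 1).val) := by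
  have hi := i.val_lt
  have hval : (i + 1).val = (i.val + 1) % c.length := by
    rw [← ZMod.val_natCast, Nat.cast_succ, ZMod.natCast_zmod_val]
  rcases Nat.lt_or_ge (i.val + 1) c.length with h | h
  · rw [hval, Nat.mod_eq_of_lt h]
    exact c.adj_getVert_succ hi
  · have h : i.val + 1 = c.length := by omega
    simpa [hval, h] using c.adj_getVert_succ hi

lemma support_toFinset_eq_image_getVert_val [DecidableEq V] :
    c.support.toFinset = univ.image fun i : ZMod c.length => c.getVert i.val := by
  ext x
  simp only [List.mem_toFinset, mem_image, mem_univ, true_and, mem_support_iff_exists_getVert]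
  constructor
  · rintro ⟨k, rfl, hk⟩
    rcases hk.lt_or_eq with hk | rfl
    · exact ⟨k, by rw [ZMod.val_natCast_of_lt hk]⟩
    · exact ⟨0, by simp⟩
  · rintro ⟨i, rfl⟩
    exact ⟨i.val, rfl, i.val_lt.le⟩

end Walk

section CycleArc

variable {n : ℕ} {f : ZMod n → V} (hadj : ∀ i, G.Adj (f i) (f (i + 1)))

def cycleArc (a : ZMod n) (k : ℕ) : G.Walk (f a) (f (a + k)) :=
  (Walk.ofAdjSeq (fun t : ℕ => f (a + t)) (fun t => by simpa [add_assoc] using hadj (a + t)) k).copy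
    (by simp) rfl

@[simp]
lemma length_cycleArc (a : ZMod n) (k : ℕ) : (cycleArc hadj a k).length = k := by
  simp [cycleArc]

lemma mem_support_cycleArc {a : ZMod n} {k : ℕ} {x : V} :
    x ∈ (cycleArc hadj a k).support ↔ ∃ t ≤ k, f (a + t) = x := by
  simp [cycleArc, Walk.support_ofAdjSeq]

lemma isPath_cycleArc (hf : Injective f) (a : ZMod n) {k : ℕ} (hk : k < n) :
    (cycleArc hadj a k).IsPath := by
  refine (Walk.isPath_copy _ _ _).2 (Walk.isPath_ofAdjSeq _ fun s hs t ht hst => ?_)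
  exact ZMod.natCast_injOn_Iio n ((Set.mem_Iic.1 hs).trans_lt hk) ((Set.mem_Iic.1 ht).trans_lt hk)
    (add_left_cancel (hf hst))

end CycleArc

section CyclicEnumeration

variable {n : ℕ} [NeZero n] {f : ZMod n → V} {u v : V}

lemma exists_isCycle_length_eq_add_one (hf : Injective f)
    (hadj : ∀ i, G.Adj (f i) (f (i + 1))) (hu : u ∉ Set.range f)
    {i : ZMod n} (h : G.Adj u (f i)) (h' : G.Adj u (f (i + 1))) :
    ∃ (x : V) (c : G.Walk x x), c.IsCycle ∧ c.length = n + 1 := by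
  have hend : i + 1 + ((n - 1 : ℕ) : ZMod n) = i := by
    rw [Nat.cast_pred (Nat.pos_of_neZero n), ZMod.natCast_self]
    ring
  let q := (cycleArc hadj (i + 1) (n - 1)).copy rfl (congrArg f hend)
  have hq : q.IsPath :=
    (Walk.isPath_copy _ _ _).2 (isPath_cycleArc hadj hf _ (Nat.sub_one_lt (NeZero.ne n)))
  have huq : u ∉ q.support := by
    simp only [q, Walk.support_copy, mem_support_cycleArc]
    rintro ⟨t, -, ht⟩
    exact hu ⟨_, ht⟩
  refine ⟨u, _, hq.isCycle_cons_concat (hadj i).ne.symm huq h' h.symm, ?_⟩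
  simp only [Walk.length_cons, Walk.length_concat, Walk.length_copy, length_cycleArc, q]
  have := Nat.pos_of_neZero n
  omega

lemma exists_isCycle_length_eq_add_two (hf : Injective f)
    (hadj : ∀ i, G.Adj (f i) (f (i + 1))) (hu : u ∉ Set.range f) (hv : v ∉ Set.range f)
    (huv : u ≠ v) {a b : ZMod n} (hab : a ≠ b) (ha : G.Adj u (f a)) (ha' : G.Adj v (f (a + 1)))
    (hb : G.Adj u (f b)) (hb' : G.Adj v (f (b + 1))) :
    ∃ (x : V) (c : G.Walk x x), c.IsCycle ∧ c.length = n + 2 := by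
  obtain ⟨k, hk⟩ : ∃ k, (b - a).val = k + 1 :=
    Nat.exists_eq_add_one.2 (Nat.pos_of_ne_zero ((ZMod.val_ne_zero _).2 (sub_ne_zero.2 hab.symm)))
  obtain ⟨m, hm⟩ : ∃ m, n = k + m + 2 :=
    ⟨n - k - 2, by have := ZMod.val_lt (b - a); omega⟩
  have hb_eq : a + 1 + (k : ZMod n) = b := by
    have := ZMod.natCast_zmod_val (b - a)
    rw [hk] at this
    push_cast at this
    linear_combination this
  have ha_eq : b + 1 + (m : ZMod n) = a := by
    have h0 : ((k + m + 2 : ℕ) : ZMod n) = 0 := hm ▸ ZMod.natCast_self n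
    rw [← hb_eq]
    push_cast at h0
    linear_combination h0
  let p := (cycleArc hadj (a + 1) k).copy rfl (congrArg f hb_eq)
  let q := (cycleArc hadj (b + 1) m).copy rfl (congrArg f ha_eq)
  have hinj {s t : ℕ} (hs : s < n) (ht : t < n) (hst : f (a + 1 + s) = f (a + 1 + t)) : s = t :=
    ZMod.natCast_injOn_Iio n hs ht (add_left_cancel (hf hst))
  have hpq : p.support.Disjoint q.support := by
    simp only [p, q, Walk.support_copy, List.disjoint_iff_ne, mem_support_cycleArc]
    rintro _ ⟨s, hs, rfl⟩ _ ⟨t, ht, rfl⟩ hst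
    rw [← hb_eq, show a + 1 + k + 1 + t = a + 1 + ((k + 1 + t : ℕ) : ZMod n) by push_cast; ring]
      at hst
    have := hinj (by omega) (by omega) hst
    omega
  have hup : u ∉ p.support := by
    simp only [p, Walk.support_copy, mem_support_cycleArc]
    rintro ⟨t, -, ht⟩
    exact hu ⟨_, ht⟩
  have huq : u ∉ q.support := by
    simp only [q, Walk.support_copy, mem_support_cycleArc]
    rintro ⟨t, -, ht⟩
    exact hu ⟨_, ht⟩
  have hp : p.IsPath := (Walk.isPath_copy _ _ _).2 (isPath_cycleArc hadj hf _ (by omega))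
  have hq : q.IsPath := (Walk.isPath_copy _ _ _).2 (isPath_cycleArc hadj hf _ (by omega))
  -- `P` runs along `f (a + 1), …, f b, u, f a, f (a - 1), …, f (b + 1)`
  let P := (p.concat hb.symm).append (.cons ha q.reverse)
  have hP : P.IsPath := hp.concat_append_cons hq.reverse (by simpa using hpq) hup
    (by simpa using huq) hb.symm ha
  have hvP : v ∉ P.support := by
    simp only [P, Walk.mem_support_append_iff, Walk.support_concat, Walk.support_cons,
      Walk.support_reverse, List.mem_append, List.mem_cons, List.mem_reverse,
      List.not_mem_nil, or_false, p, q, Walk.support_copy, mem_support_cycleArc]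
    rintro ((⟨t, -, ht⟩ | rfl) | rfl | ⟨t, -, ht⟩)
    exacts [hv ⟨_, ht⟩, huv rfl, huv rfl, hv ⟨_, ht⟩]
  refine ⟨v, _, hP.isCycle_cons_concat (hf.ne (by simpa using hab)) hvP ha' hb'.symm, ?_⟩
  simp only [Walk.length_cons, Walk.length_concat, Walk.length_append, Walk.length_reverse,
    Walk.length_copy, length_cycleArc, P, p, q]
  omega

lemma not_adj_add_one_of_adj (hf : Injective f)
    (hadj : ∀ i, G.Adj (f i) (f (i + 1)))
    (hmax : ∀ (x : V) (c : G.Walk x x), c.IsCycle → c.length ≤ n) (hu : u ∉ Set.range f)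
    {i : ZMod n} (h : G.Adj u (f i)) : ¬ G.Adj u (f (i + 1)) := by
  intro h'
  obtain ⟨x, c, hc, hlen⟩ := exists_isCycle_length_eq_add_one hf hadj hu h h'
  have := hmax x c hc
  omega

lemma card_filter_adj_and_adj_add_one_le_one [DecidableRel G.Adj] (hf : Injective f)
    (hadj : ∀ i, G.Adj (f i) (f (i + 1)))
    (hmax : ∀ (x : V) (c : G.Walk x x), c.IsCycle → c.length ≤ n) (hu : u ∉ Set.range f)
    (hv : v ∉ Set.range f) :
    #{i | G.Adj u (f i) ∧ G.Adj v (f (i + 1))} ≤ 1 := by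
  simp only [card_le_one, mem_filter, mem_univ, true_and]
  rintro a ⟨ha, ha'⟩ b ⟨hb, hb'⟩
  by_contra hab
  obtain rfl | huv := eq_or_ne u v
  · exact not_adj_add_one_of_adj hf hadj hmax hu ha ha'
  obtain ⟨x, c, hc, hlen⟩ := exists_isCycle_length_eq_add_two hf hadj hu hv huv hab ha ha' hb hb'
  have := hmax x c hc
  omega

lemma two_mul_card_filter_adj_or_adj_le [DecidableRel G.Adj] (hf : Injective f)
    (hadj : ∀ i, G.Adj (f i) (f (i + 1)))
    (hmax : ∀ (x : V) (c : G.Walk x x), c.IsCycle → c.length ≤ n) (hu : u ∉ Set.range f)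
    (hv : v ∉ Set.range f) :
    2 * #{i | G.Adj u (f i) ∨ G.Adj v (f i)} ≤ n + 2 := by
  set S : Finset (ZMod n) := {i | G.Adj u (f i) ∨ G.Adj v (f i)}
  have hconsecutive : {i ∈ S | i + 1 ∈ S} ⊆
      ({i | G.Adj u (f i) ∧ G.Adj v (f (i + 1))} : Finset (ZMod n)) ∪
        ({i | G.Adj v (f i) ∧ G.Adj u (f (i + 1))} : Finset (ZMod n)) := by
    intro i
    simp only [S, mem_filter, mem_univ, true_and, mem_union]
    rintro ⟨hi | hi, hi' | hi'⟩
    · exact absurd hi' (not_adj_add_one_of_adj hf hadj hmax hu hi)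
    · exact .inl ⟨hi, hi'⟩
    · exact .inr ⟨hi, hi'⟩
    · exact absurd hi' (not_adj_add_one_of_adj hf hadj hmax hv hi)
  calc 2 * #S ≤ n + #{i ∈ S | i + 1 ∈ S} :=
        (two_mul_card_le_card_add_card_filter_apply_mem (Equiv.addRight 1) S).trans_eq
          (by rw [ZMod.card]; rfl)
    _ ≤ n + (1 + 1) := by
        grw [card_le_card hconsecutive, card_union_le,
          card_filter_adj_and_adj_add_one_le_one hf hadj hmax hu hv,
          card_filter_adj_and_adj_add_one_le_one hf hadj hmax hv hu]

end CyclicEnumeration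

end SimpleGraph

open SimpleGraph

theorem stmt_4_general {V : Type*} [DecidableEq V] (G : SimpleGraph V) [DecidableRel G.Adj]
    (w : V) (c : G.Walk w w) (hc : c.IsCycle)
    (hmax : ∀ (x : V) (c' : G.Walk x x), c'.IsCycle → c'.length ≤ c.length)
    (u v : V) (hu : u ∉ c.support) (hv : v ∉ c.support) :
    2 * ((c.support.toFinset.filter (fun y => G.Adj u y)) ∪
          (c.support.toFinset.filter (fun y => G.Adj v y))).card - 2 ≤ c.length := by
  have : NeZero c.length := ⟨by have := hc.three_le_length; omega⟩
  have hoff {x : V} (hx : x ∉ c.support) :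
      x ∉ Set.range fun i : ZMod c.length => c.getVert i.val := by
    rintro ⟨i, rfl⟩
    exact hx (c.getVert_mem_support _)
  have hf := hc.injective_getVert_val
  rw [← filter_or, c.support_toFinset_eq_image_getVert_val, filter_image,
    card_image_of_injective _ hf]
  have := two_mul_card_filter_adj_or_adj_le hf c.adj_getVert_val_add_one hmax (hoff hu) (hoff hv)
  omega

theorem stmt_4 {V : Type*} [Fintype V] [DecidableEq V] (G : SimpleGraph V) [DecidableRel G.Adj]
    (w : V) (c : G.Walk w w) (hc : c.IsCycle)
    (hmax : ∀ (x : V) (c' : G.Walk x x), c'.IsCycle → c'.length ≤ c.length)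
    (u v : V) (hu : u ∉ c.support) (hv : v ∉ c.support) :
    2 * ((c.support.toFinset.filter (fun y => G.Adj u y)) ∪
          (c.support.toFinset.filter (fun y => G.Adj v y))).card - 2 ≤ c.length :=
  stmt_4_general G w c hc hmax u v hu hv
end

section
/- Let G be a graph of order n ≥ 4 with minimum degree δ(G) ≥ (n+2)/2. Then G is panconnected: for every pair of distinct vertices u, v there exists a u–v path of every length ℓ with 2 ≤ ℓ ≤ n−1 (equivalently, of every order from 3 to n). -/
open SimpleGraph

/-!
Paths of length 2 and 3 come from common neighbours: by the degree condition any two vertices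
have at least two. Longer paths are obtained by lengthening a `u`–`v` path `x₀ x₁ … xₗ` with
`3 ≤ l ≤ n - 2` by one. If that is impossible, no vertex `w` off the path is adjacent to two
consecutive `xᵢ, xᵢ₊₁`, and if `w` is adjacent to `xⱼ` and `xₖ` (`j < k`) then `xⱼ₊₁ ≁ xₖ₊₁`,
since otherwise one could rotate the segment between them. Counting degrees with these two facts,
an off-path neighbour of `xᵢ` forces two off-path neighbours of `xᵢ₊₁` (and of `xᵢ₋₁`, by reversing
the path), and some `xᵢ` has one; hence every `xᵢ` has one. Two distinct off-path neighbours `a` of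
`x₀` and `b` of `x₃` each have at least `(n - l) / 2` neighbours among the `n - l - 1` vertices off
the path, hence a common one `c`, and `x₀ a c b x₃` replaces `x₀ x₁ x₂ x₃` to give a longer path.
-/

theorem Finset.two_mul_card_le_of_succ_notMem {s : Finset ℕ} {n : ℕ}
    (hs : s ⊆ Finset.range (n + 1)) (h : ∀ i ∈ s, i + 1 ∉ s) : 2 * s.card ≤ n + 2 := by
  have hdisj : Disjoint s (s.image (· + 1)) := by
    rw [Finset.disjoint_right]
    intro _ hmem hs'
    obtain ⟨i, hi, rfl⟩ := Finset.mem_image.mp hmem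
    exact h i hi hs'
  have hsub : s ∪ s.image (· + 1) ⊆ Finset.range (n + 2) := by
    intro i hi
    rcases Finset.mem_union.mp hi with hi | hi
    · have := Finset.mem_range.mp (hs hi)
      exact Finset.mem_range.mpr (by omega)
    · obtain ⟨j, hj, rfl⟩ := Finset.mem_image.mp hi
      have := Finset.mem_range.mp (hs hj)
      exact Finset.mem_range.mpr (by omega)
  have := Finset.card_le_card hsub
  rw [Finset.card_union_of_disjoint hdisj, Finset.card_image_of_injective _ (add_left_injective 1),
    Finset.card_range] at this
  omega

theorem Nat.forall_le_of_iff_succ {P : ℕ → Prop} {n i₀ : ℕ} (hi₀ : i₀ ≤ n) (h₀ : P i₀)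
    (h : ∀ i < n, P i ↔ P (i + 1)) : ∀ i ≤ n, P i := by
  have key : ∀ i ≤ n, P i ↔ P 0 := by
    intro i
    induction i with
    | zero => simp
    | succ i ih => intro hi; rw [← h i (by omega), ih (by omega)]
  exact fun i hi => (key i hi).mpr ((key i₀ hi₀).mp h₀)

namespace SimpleGraph.Walk

open Finset

variable {V : Type*} {G : SimpleGraph V} {u v w : V} {p : G.Walk u v}

lemma exists_getVert_eq_of_mem_support_take {n : ℕ} {x : V} (hx : x ∈ (p.take n).support) :
    ∃ i ≤ n, i ≤ p.length ∧ p.getVert i = x := by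
  obtain ⟨k, rfl, hk⟩ := mem_support_iff_exists_getVert.mp hx
  rw [take_length] at hk
  exact ⟨k, by omega, by omega, by rw [take_getVert, min_eq_right (by omega)]⟩

lemma exists_getVert_eq_of_mem_support_drop {n : ℕ} (hn : n ≤ p.length) {x : V}
    (hx : x ∈ (p.drop n).support) : ∃ i, n ≤ i ∧ i ≤ p.length ∧ p.getVert i = x := by
  obtain ⟨k, rfl, hk⟩ := mem_support_iff_exists_getVert.mp hx
  rw [drop_length] at hk
  exact ⟨n + k, by omega, by omega, (drop_getVert p n k).symm⟩

lemma IsPath.append {q : G.Walk v w} (hp : p.IsPath) (hq : q.IsPath)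
    (h : ∀ x ∈ p.support, x ∈ q.support → x = v) : (p.append q).IsPath := by
  rw [isPath_def, support_append, List.nodup_append]
  have hq' := hq.support_nodup
  rw [← cons_tail_support, List.nodup_cons] at hq'
  refine ⟨hp.support_nodup, hq'.2, fun x hxp y hyq hxy => ?_⟩
  subst hxy
  obtain rfl := h x hxp (List.mem_of_mem_tail hyq)
  exact hq'.1 hyq

theorem IsPath.exists_isPath_replace (hp : p.IsPath) {j t : ℕ} (hjt : j ≤ t)
    (ht : t ≤ p.length) {r : G.Walk (p.getVert j) (p.getVert t)} (hr : r.IsPath)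
    (hrp : ∀ i ≤ p.length, p.getVert i ∈ r.support → j ≤ i ∧ i ≤ t) :
    ∃ q : G.Walk u v, q.IsPath ∧ q.length = j + r.length + (p.length - t) := by
  have hrd : (r.append (p.drop t)).IsPath := by
    refine hr.append (hp.drop t) fun x hxr hxd => ?_
    obtain ⟨i, hti, hil, rfl⟩ := exists_getVert_eq_of_mem_support_drop ht hxd
    rw [show i = t by have := hrp i hil hxr; omega]
  refine ⟨(p.take j).append (r.append (p.drop t)), (hp.take j).append hrd fun x hxj hxrd => ?_,
    by simp only [length_append, take_length, drop_length]; omega⟩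
  obtain ⟨i, hij, hil, rfl⟩ := exists_getVert_eq_of_mem_support_take hxj
  rcases (mem_support_append_iff _ _).mp hxrd with hxr | hxd
  · rw [show i = j by have := hrp i hil hxr; omega]
  · obtain ⟨i', hti', hi'l, he⟩ := exists_getVert_eq_of_mem_support_drop ht hxd
    have := hp.getVert_injOn hi'l hil he
    rw [show i = j by omega]

theorem IsPath.length_ne_of_replace (hp : p.IsPath)
    (hmax : ∀ q : G.Walk u v, q.IsPath → q.length ≠ p.length + 1) {j t : ℕ} (hjt : j ≤ t)
    (ht : t ≤ p.length) {r : G.Walk (p.getVert j) (p.getVert t)} (hr : r.IsPath)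
    (hrp : ∀ i ≤ p.length, p.getVert i ∈ r.support → j ≤ i ∧ i ≤ t) :
    r.length ≠ t - j + 1 := by
  intro hlen
  obtain ⟨q, hq, hql⟩ := hp.exists_isPath_replace hjt ht hr hrp
  exact hmax q hq (by omega)

lemma IsPath.not_adj_getVert_succ (hp : p.IsPath)
    (hmax : ∀ q : G.Walk u v, q.IsPath → q.length ≠ p.length + 1) (hw : w ∉ p.support)
    {j : ℕ} (hj : j < p.length) (hjw : G.Adj (p.getVert j) w) :
    ¬G.Adj w (p.getVert (j + 1)) := by
  intro hwj
  have hne : p.getVert j ≠ p.getVert (j + 1) := fun h =>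
    absurd (hp.getVert_injOn (by simp; omega) (by simp; omega) h) (by omega)
  refine hp.length_ne_of_replace hmax (by omega) hj (r := cons hjw (cons hwj .nil)) ?_ ?_
    (by simp)
  · simp [cons_isPath_iff, hjw.ne, hwj.ne, hne]
  · intro i hi hir
    simp only [support_cons, support_nil, List.mem_cons, List.not_mem_nil, or_false] at hir
    rcases hir with h | h | h
    · have := hp.getVert_injOn hi (by simp; omega) h; omega
    · exact absurd (h ▸ p.getVert_mem_support i) hw
    · have := hp.getVert_injOn hi (by simp; omega) h; omega

lemma IsPath.not_adj_of_detour (hp : p.IsPath)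
    (hmax : ∀ q : G.Walk u v, q.IsPath → q.length ≠ p.length + 1) {a b c : V}
    (ha : a ∉ p.support) (hb : b ∉ p.support) (hc : c ∉ p.support) (hab : a ≠ b) {j : ℕ}
    (hj : j + 3 ≤ p.length) (hja : G.Adj (p.getVert j) a) (hac : G.Adj a c) (hcb : G.Adj c b) :
    ¬G.Adj b (p.getVert (j + 3)) := by
  intro hbj
  have hoff : ∀ z ∉ p.support, ∀ i, p.getVert i ≠ z := fun z hz i h =>
    hz (h ▸ p.getVert_mem_support i)
  have hne : p.getVert j ≠ p.getVert (j + 3) := fun h =>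
    absurd (hp.getVert_injOn (by simp; omega) (by simp; omega) h) (by omega)
  refine hp.length_ne_of_replace hmax (t := j + 3) (by omega) hj
    (r := cons hja (cons hac (cons hcb (cons hbj .nil)))) ?_ ?_ (by simp)
  · simp [cons_isPath_iff, hac.ne, hcb.ne, hbj.ne, hab, hne, hoff a ha, hoff b hb, hoff c hc,
      (hoff a ha _).symm, (hoff c hc _).symm]
  · intro i hi hir
    simp only [support_cons, support_nil, List.mem_cons, List.not_mem_nil, or_false] at hir
    rcases hir with h | h | h | h | h
    · have := hp.getVert_injOn hi (by simp; omega) h; omega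
    · exact absurd h (hoff a ha i)
    · exact absurd h (hoff c hc i)
    · exact absurd h (hoff b hb i)
    · have := hp.getVert_injOn hi (by simp; omega) h; omega

/-- Otherwise `x₀ … xⱼ w xₖ xₖ₋₁ … xⱼ₊₁ xₖ₊₁ … xₗ` would be a path of length `l + 1`. -/
lemma IsPath.not_adj_getVert_succ_getVert_succ (hp : p.IsPath)
    (hmax : ∀ q : G.Walk u v, q.IsPath → q.length ≠ p.length + 1) (hw : w ∉ p.support)
    {j k : ℕ} (hjk : j < k) (hk : k < p.length) (hjw : G.Adj (p.getVert j) w)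
    (hwk : G.Adj w (p.getVert k)) : ¬G.Adj (p.getVert (j + 1)) (p.getVert (k + 1)) := by
  intro hchord
  obtain ⟨m, rfl⟩ : ∃ m, k = j + 1 + m := ⟨k - j - 1, by omega⟩
  let s : G.Walk (p.getVert (j + 1)) (p.getVert (j + 1 + m)) :=
    ((p.drop (j + 1)).take m).copy rfl (p.drop_getVert _ _)
  have hs : s.IsPath := (isPath_copy _ _ _).mpr ((hp.drop _).take _)
  have hs_len : s.length = m := by simp only [s, length_copy, take_length, drop_length]; omega
  let s' := s.reverse.concat hchord
  have hs' : ∀ x ∈ s'.support, ∃ i, j + 1 ≤ i ∧ i ≤ j + 1 + m + 1 ∧ p.getVert i = x := by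
    intro x hx
    rw [support_concat, List.mem_append, support_reverse, List.mem_reverse,
      List.mem_singleton] at hx
    rcases hx with hx | rfl
    · rw [support_copy] at hx
      obtain ⟨i, him, -, rfl⟩ := exists_getVert_eq_of_mem_support_take hx
      exact ⟨j + 1 + i, by omega, by omega, (drop_getVert ..).symm⟩
    · exact ⟨_, by omega, le_rfl, rfl⟩
  have hinj : ∀ i i', i ≤ p.length → i' ≤ p.length → p.getVert i = p.getVert i' → i = i' :=
    fun i i' hi hi' h => hp.getVert_injOn hi hi' h
  refine hp.length_ne_of_replace hmax (t := j + 1 + m + 1) (by omega) hk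
    (r := cons hjw (cons hwk s')) ?_ ?_ (by simp [s', hs_len]; omega)
  · refine (cons_isPath_iff _ _).mpr ⟨(cons_isPath_iff _ _).mpr ⟨?_, ?_⟩, ?_⟩
    · refine (concat_isPath_iff _).mpr ⟨hs.reverse, fun hx => ?_⟩
      rw [support_reverse, List.mem_reverse, support_copy] at hx
      obtain ⟨i, him, -, he⟩ := exists_getVert_eq_of_mem_support_take hx
      rw [drop_getVert] at he
      have := hinj _ _ (by omega) (by omega) he
      omega
    · intro hx
      obtain ⟨i, -, -, rfl⟩ := hs' w hx
      exact hw (p.getVert_mem_support i)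
    · rw [support_cons, List.mem_cons, not_or]
      refine ⟨hjw.ne, fun hx => ?_⟩
      obtain ⟨i, hi, hi', he⟩ := hs' _ hx
      have := hinj _ _ (by omega) (by omega) he
      omega
  · intro i hi hir
    rw [support_cons, support_cons, List.mem_cons, List.mem_cons] at hir
    rcases hir with h | h | h
    · have := hinj _ _ hi (by omega) h; omega
    · exact absurd (h ▸ p.getVert_mem_support i) hw
    · obtain ⟨i', hi', hi'', he⟩ := hs' _ h
      have := hinj _ _ (by omega) hi he
      omega

lemma IsPath.card_support_toFinset [DecidableEq V] (hp : p.IsPath) :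
    #p.support.toFinset = p.length + 1 := by
  rw [List.toFinset_card_of_nodup hp.support_nodup, length_support]

section Counting

variable [DecidableRel G.Adj]

def adjIndices (p : G.Walk u v) (y : V) : Finset ℕ :=
  (range (p.length + 1)).filter fun i => G.Adj y (p.getVert i)

@[simp]
lemma mem_adjIndices {y : V} {i : ℕ} :
    i ∈ p.adjIndices y ↔ i ≤ p.length ∧ G.Adj y (p.getVert i) := by
  simp [adjIndices]

lemma IsPath.two_mul_card_adjIndices_le (hp : p.IsPath)
    (hmax : ∀ q : G.Walk u v, q.IsPath → q.length ≠ p.length + 1) (hw : w ∉ p.support) :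
    2 * #(p.adjIndices w) ≤ p.length + 2 := by
  refine two_mul_card_le_of_succ_notMem (fun i hi => ?_) fun i hi hi' => ?_
  · exact mem_range.mpr (Nat.lt_succ_of_le (mem_adjIndices.mp hi).1)
  · rw [mem_adjIndices] at hi hi'
    exact hp.not_adj_getVert_succ hmax hw (by omega) hi.2.symm hi'.2

variable [Fintype V] [DecidableEq V]

def offNeighborFinset (p : G.Walk u v) (y : V) : Finset V :=
  G.neighborFinset y \ p.support.toFinset

@[simp]
lemma mem_offNeighborFinset {y z : V} :
    z ∈ p.offNeighborFinset y ↔ G.Adj y z ∧ z ∉ p.support := by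
  simp [offNeighborFinset]

@[simp]
lemma offNeighborFinset_reverse (y : V) :
    p.reverse.offNeighborFinset y = p.offNeighborFinset y := by
  simp [offNeighborFinset, support_reverse, List.toFinset_reverse]

lemma IsPath.degree_eq (hp : p.IsPath) (y : V) :
    G.degree y = #(p.offNeighborFinset y) + #(p.adjIndices y) := by
  have himage : G.neighborFinset y ∩ p.support.toFinset = (p.adjIndices y).image p.getVert := by
    ext x
    simp only [mem_inter, mem_neighborFinset, List.mem_toFinset, mem_support_iff_exists_getVert,
      mem_image, mem_adjIndices]
    constructor
    · rintro ⟨hyx, i, rfl, hi⟩; exact ⟨i, ⟨hi, hyx⟩, rfl⟩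
    · rintro ⟨i, ⟨hi, hyx⟩, rfl⟩; exact ⟨hyx, i, rfl, hi⟩
  rw [← card_neighborFinset_eq_degree, ← card_sdiff_add_card_inter _ p.support.toFinset, himage,
    card_image_of_injOn fun i hi j hj h => hp.getVert_injOn (mem_adjIndices.mp hi).1
      (mem_adjIndices.mp hj).1 h]
  rfl

lemma IsPath.card_offNeighborFinset_add_le (hp : p.IsPath) (hw : w ∉ p.support) :
    #(p.offNeighborFinset w) + p.length + 2 ≤ Fintype.card V := by
  have hsub : p.offNeighborFinset w ⊆ (univ \ p.support.toFinset).erase w := by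
    intro z hz
    rw [mem_offNeighborFinset] at hz
    simp [hz.1.ne', hz.2]
  have hw' : w ∈ univ \ p.support.toFinset := by simp [hw]
  have hcard := card_le_card hsub
  have hpos : 0 < #(univ \ p.support.toFinset) := card_pos.mpr ⟨w, hw'⟩
  rw [card_erase_of_mem hw'] at hcard
  rw [card_univ_sdiff, hp.card_support_toFinset] at hcard hpos
  omega

lemma IsPath.card_le_length_add_two_mul_card_offNeighborFinset (hp : p.IsPath)
    (hδ : ∀ x, Fintype.card V + 2 ≤ 2 * G.degree x)
    (hmax : ∀ q : G.Walk u v, q.IsPath → q.length ≠ p.length + 1) (hw : w ∉ p.support) :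
    Fintype.card V ≤ p.length + 2 * #(p.offNeighborFinset w) := by
  have := hp.two_mul_card_adjIndices_le hmax hw
  have := hp.degree_eq w
  have := hδ w
  omega

lemma IsPath.offNeighborFinset_inter_nonempty (hp : p.IsPath)
    (hδ : ∀ x, Fintype.card V + 2 ≤ 2 * G.degree x)
    (hmax : ∀ q : G.Walk u v, q.IsPath → q.length ≠ p.length + 1) {a b : V}
    (ha : a ∉ p.support) (hb : b ∉ p.support) :
    (p.offNeighborFinset a ∩ p.offNeighborFinset b).Nonempty := by
  have hsub : ∀ y, p.offNeighborFinset y ⊆ univ \ p.support.toFinset := fun y z hz => by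
    simp [(mem_offNeighborFinset.mp hz).2]
  refine inter_nonempty_of_card_lt_card_add_card (hsub a) (hsub b) ?_
  have := hp.card_le_length_add_two_mul_card_offNeighborFinset hδ hmax ha
  have := hp.card_le_length_add_two_mul_card_offNeighborFinset hδ hmax hb
  have := hp.card_offNeighborFinset_add_le ha
  rw [card_univ_sdiff, hp.card_support_toFinset]
  omega

lemma IsPath.two_le_card_offNeighborFinset_succ (hp : p.IsPath)
    (hδ : ∀ x, Fintype.card V + 2 ≤ 2 * G.degree x)
    (hmax : ∀ q : G.Walk u v, q.IsPath → q.length ≠ p.length + 1) {i : ℕ} (hi : i < p.length)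
    (hne : (p.offNeighborFinset (p.getVert i)).Nonempty) :
    2 ≤ #(p.offNeighborFinset (p.getVert (i + 1))) := by
  obtain ⟨w, hw⟩ := hne
  rw [mem_offNeighborFinset] at hw
  set y := p.getVert (i + 1)
  set S := ((p.adjIndices w).erase p.length).image (· + 1)
  have hS : #(p.adjIndices w) ≤ #S + 1 := by
    rw [card_image_of_injective _ (add_left_injective 1)]
    have := pred_card_le_card_erase (s := p.adjIndices w) (a := p.length)
    omega
  -- the successors of the neighbours of `w` on the path are not adjacent to `y`
  have hdisj : Disjoint (p.adjIndices y) S := by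
    rw [disjoint_right]
    intro _ hk hky
    obtain ⟨j, hj, rfl⟩ := mem_image.mp hk
    obtain ⟨hjl, hj⟩ := mem_erase.mp hj
    rw [mem_adjIndices] at hj hky
    obtain hij | rfl | hji := lt_trichotomy i j
    · exact hp.not_adj_getVert_succ_getVert_succ hmax hw.2 hij (by omega) hw.1 hj.2 hky.2
    · exact G.irrefl hky.2
    · exact hp.not_adj_getVert_succ_getVert_succ hmax hw.2 hji hi hj.2.symm hw.1.symm hky.2.symm
  have hsub : p.adjIndices y ∪ S ⊆ range (p.length + 1) := by
    intro k hk
    rcases mem_union.mp hk with hk | hk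
    · exact mem_range.mpr (Nat.lt_succ_of_le (mem_adjIndices.mp hk).1)
    · obtain ⟨j, hj, rfl⟩ := mem_image.mp hk
      obtain ⟨hjl, hj⟩ := mem_erase.mp hj
      exact mem_range.mpr (by have := (mem_adjIndices.mp hj).1; omega)
  have hcard := card_le_card hsub
  rw [card_union_of_disjoint hdisj, card_range] at hcard
  have := hp.card_offNeighborFinset_add_le hw.2
  have := hp.degree_eq w
  have := hp.degree_eq y
  have := hδ w
  have := hδ y
  omega

lemma IsPath.two_le_card_offNeighborFinset_pred (hp : p.IsPath)
    (hδ : ∀ x, Fintype.card V + 2 ≤ 2 * G.degree x)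
    (hmax : ∀ q : G.Walk u v, q.IsPath → q.length ≠ p.length + 1) {i : ℕ} (hi : i < p.length)
    (hne : (p.offNeighborFinset (p.getVert (i + 1))).Nonempty) :
    2 ≤ #(p.offNeighborFinset (p.getVert i)) := by
  have hmax' : ∀ q : G.Walk v u, q.IsPath → q.length ≠ p.reverse.length + 1 := fun q hq h =>
    hmax q.reverse hq.reverse (by simpa using h)
  have key := hp.reverse.two_le_card_offNeighborFinset_succ hδ hmax' (i := p.length - (i + 1))
    (by simp; omega) (by rwa [getVert_reverse, offNeighborFinset_reverse, Nat.sub_sub_self hi])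
  rwa [getVert_reverse, offNeighborFinset_reverse,
    show p.length - (p.length - (i + 1) + 1) = i by omega] at key

lemma IsPath.exists_offNeighborFinset_nonempty (hp : p.IsPath)
    (hδ : ∀ x, Fintype.card V + 2 ≤ 2 * G.degree x) (hn : p.length + 2 ≤ Fintype.card V) :
    ∃ i ≤ p.length, (p.offNeighborFinset (p.getVert i)).Nonempty := by
  by_contra! h
  obtain ⟨w, -, hw⟩ := exists_mem_notMem_of_card_lt_card (s := p.support.toFinset) (t := univ)
    (by rw [hp.card_support_toFinset, card_univ]; omega)
  rw [List.mem_toFinset] at hw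
  have hw_adj : p.adjIndices w = ∅ := by
    refine eq_empty_of_forall_notMem fun i hi => ?_
    rw [mem_adjIndices] at hi
    simpa [h i hi.1] using (mem_offNeighborFinset (p := p)).mpr ⟨hi.2.symm, hw⟩
  have hu_adj : p.adjIndices (p.getVert 0) ⊆ (range (p.length + 1)).erase 0 := by
    intro i hi
    rw [mem_adjIndices] at hi
    refine mem_erase.mpr ⟨?_, mem_range.mpr (by omega)⟩
    rintro rfl
    exact G.irrefl hi.2
  have hu_card := card_le_card hu_adj
  rw [card_erase_of_mem (by simp), card_range] at hu_card
  have hw_deg := hp.degree_eq w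
  have hu_deg := hp.degree_eq (p.getVert 0)
  rw [hw_adj, card_empty] at hw_deg
  rw [h 0 (Nat.zero_le _), card_empty] at hu_deg
  have := hp.card_offNeighborFinset_add_le hw
  have := hδ w
  have := hδ (p.getVert 0)
  omega

theorem IsPath.exists_isPath_length_succ (hp : p.IsPath)
    (hδ : ∀ x, Fintype.card V + 2 ≤ 2 * G.degree x) (hl : 3 ≤ p.length)
    (hn : p.length + 2 ≤ Fintype.card V) :
    ∃ q : G.Walk u v, q.IsPath ∧ q.length = p.length + 1 := by
  by_contra! hmax
  obtain ⟨i₀, hi₀, hseed⟩ := hp.exists_offNeighborFinset_nonempty hδ hn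
  have hall : ∀ i ≤ p.length, (p.offNeighborFinset (p.getVert i)).Nonempty :=
    Nat.forall_le_of_iff_succ hi₀ hseed fun i hi =>
      ⟨fun h => card_pos.mp (by have := hp.two_le_card_offNeighborFinset_succ hδ hmax hi h; omega),
       fun h => card_pos.mp (by have := hp.two_le_card_offNeighborFinset_pred hδ hmax hi h; omega)⟩
  obtain ⟨a, ha⟩ := hall 0 (Nat.zero_le _)
  obtain ⟨b, hb, hba⟩ := exists_mem_ne
    (hp.two_le_card_offNeighborFinset_succ hδ hmax (i := 2) (by omega) (hall 2 (by omega))) a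
  rw [mem_offNeighborFinset] at ha hb
  obtain ⟨c, hc⟩ := hp.offNeighborFinset_inter_nonempty hδ hmax ha.2 hb.2
  rw [mem_inter, mem_offNeighborFinset, mem_offNeighborFinset] at hc
  exact hp.not_adj_of_detour hmax ha.2 hb.2 hc.1.2 hba.symm (j := 0) hl ha.1 hc.1.1 hc.2.1.symm
    hb.1.symm

end Counting

end SimpleGraph.Walk

namespace SimpleGraph

open Finset

variable {V : Type*} {G : SimpleGraph V} [Fintype V] [DecidableRel G.Adj]

lemma two_le_card_neighborFinset_inter [DecidableEq V]
    (hδ : ∀ x, Fintype.card V + 2 ≤ 2 * G.degree x) (a b : V) :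
    2 ≤ #(G.neighborFinset a ∩ G.neighborFinset b) := by
  have hunion := card_union_add_card_inter (G.neighborFinset a) (G.neighborFinset b)
  rw [card_neighborFinset_eq_degree, card_neighborFinset_eq_degree] at hunion
  have := card_le_univ (G.neighborFinset a ∪ G.neighborFinset b)
  have := hδ a
  have := hδ b
  omega

lemma exists_isPath_length_two (hδ : ∀ x, Fintype.card V + 2 ≤ 2 * G.degree x) {u v : V}
    (huv : u ≠ v) : ∃ p : G.Walk u v, p.IsPath ∧ p.length = 2 := by
  classical
  obtain ⟨w, hw⟩ := card_pos.mp (two_pos.trans_le (two_le_card_neighborFinset_inter hδ u v))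
  rw [mem_inter, mem_neighborFinset, mem_neighborFinset] at hw
  exact ⟨.cons hw.1 (.cons hw.2.symm .nil), by simp [hw.1.ne, hw.2.ne', huv], rfl⟩

lemma exists_isPath_length_three (hδ : ∀ x, Fintype.card V + 2 ≤ 2 * G.degree x) {u v : V}
    (huv : u ≠ v) : ∃ p : G.Walk u v, p.IsPath ∧ p.length = 3 := by
  classical
  have hu := two_le_card_neighborFinset_inter hδ u u
  rw [inter_self] at hu
  obtain ⟨a, hua, hav⟩ := exists_mem_ne hu v
  rw [mem_neighborFinset] at hua
  obtain ⟨b, hb, hbu⟩ := exists_mem_ne (two_le_card_neighborFinset_inter hδ a v) u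
  rw [mem_inter, mem_neighborFinset, mem_neighborFinset] at hb
  exact ⟨.cons hua (.cons hb.1 (.cons hb.2.symm .nil)),
    by simp [hua.ne, hb.1.ne, hb.2.ne', huv, hav, hbu.symm], rfl⟩

end SimpleGraph

theorem stmt_8_general {V : Type*} [Fintype V] (G : SimpleGraph V) [DecidableRel G.Adj]
    (hδ : ∀ v, ((Fintype.card V : ℝ) + 2) / 2 ≤ (G.degree v : ℝ))
    (u v : V) (huv : u ≠ v) (l : ℕ) (hl1 : 2 ≤ l) (hl2 : l ≤ Fintype.card V - 1) :
    ∃ p : G.Walk u v, p.IsPath ∧ p.length = l := by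
  classical
  have hδ' : ∀ x, Fintype.card V + 2 ≤ 2 * G.degree x := fun x => by
    have := hδ x
    rw [div_le_iff₀ two_pos] at this
    exact_mod_cast (by linarith : (Fintype.card V : ℝ) + 2 ≤ 2 * G.degree x)
  induction l, hl1 using Nat.le_induction with
  | base => exact exists_isPath_length_two hδ' huv
  | succ l hl ih =>
    obtain rfl | hl3 := (show l = 2 ∨ 3 ≤ l by omega)
    · exact exists_isPath_length_three hδ' huv
    · obtain ⟨p, hp, rfl⟩ := ih (by omega)
      exact hp.exists_isPath_length_succ hδ' hl3 (by omega)

theorem stmt_8 {V : Type*} [Fintype V] (G : SimpleGraph V) [DecidableRel G.Adj]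
    (h4 : 4 ≤ Fintype.card V)
    (hδ : ∀ v, ((Fintype.card V : ℝ) + 2) / 2 ≤ (G.degree v : ℝ))
    (u v : V) (huv : u ≠ v) (l : ℕ) (hl1 : 2 ≤ l) (hl2 : l ≤ Fintype.card V - 1) :
    ∃ p : G.Walk u v, p.IsPath ∧ p.length = l :=
  stmt_8_general G hδ u v huv l hl1 hl2
end

section
/- Let G be a graph on 2n vertices containing no K_{2,n}, and suppose the complement Ḡ has minimum degree at least ⌈n/2⌉ + 250 and contains no cycle of length m for some fixed even m with n+1 ≤ m ≤ 2n−4008 and n ≥ 4511. Then Ḡ is 2-connected. -/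
open SimpleGraph

lemma aux_contains {V : Type*} (G : SimpleGraph V) (n : ℕ)
    (A B : Finset V) (hAB : ∀ a ∈ A, ∀ b ∈ B, G.Adj a b)
    (hA : 2 ≤ A.card) (hB : n ≤ B.card) :
    Contains G (completeBipartiteGraph (Fin 2) (Fin n)) := by
  classical
  obtain ⟨A', hA'sub, hA'card⟩ := Finset.exists_subset_card_eq hA
  obtain ⟨B', hB'sub, hB'card⟩ := Finset.exists_subset_card_eq hB
  let eA := A'.equivFinOfCardEq hA'card
  let eB := B'.equivFinOfCardEq hB'card
  have hAdj : ∀ (i : Fin 2) (j : Fin n), G.Adj ((eA.symm i : A') : V) ((eB.symm j : B') : V) :=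
    fun i j => hAB _ (hA'sub (eA.symm i).2) _ (hB'sub (eB.symm j).2)
  refine ⟨⟨Sum.elim (fun i => ((eA.symm i : A') : V)) (fun j => ((eB.symm j : B') : V)), ?_⟩, ?_⟩
  · rintro (i | j) (i' | j') h
    · simp at h
    · exact hAdj i j'
    · exact (hAdj i' j).symm
    · simp at h
  · rintro (i | j) (i' | j') h
    · exact congrArg Sum.inl (eA.symm.injective (Subtype.ext h))
    · exact absurd h (hAdj i j').ne
    · exact absurd h.symm (hAdj i' j).ne
    · exact congrArg Sum.inr (eB.symm.injective (Subtype.ext h))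

theorem stmt_12 {V : Type*} [Fintype V] [DecidableEq V] (G : SimpleGraph V) [DecidableRel G.Adj]
    (n m : ℕ) (hn : 4511 ≤ n) (hcard : Fintype.card V = 2 * n)
    (hm : Even m) (hm1 : n + 1 ≤ m) (hm2 : m ≤ 2 * n - 4008)
    (hG : ¬ Contains G (completeBipartiteGraph (Fin 2) (Fin n)))
    (hδ : ∀ v, (n + 1) / 2 + 250 ≤ Gᶜ.degree v)
    (hGc : ¬ HasCycleLength Gᶜ m) :
    IsKConnected 2 Gᶜ := by
  classical
  refine ⟨by omega, ?_⟩
  intro S hS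
  have hScard : S.card ≤ 1 := by omega
  set Tset : Set V := (↑S : Set V)ᶜ with hT
  have hTfin : Fintype.card Tset = Fintype.card V - S.card := by
    simp only [hT]
    rw [Fintype.card_compl_set]
    simp
  have hne : Nonempty Tset := by
    rw [← Fintype.card_pos_iff, hTfin, hcard]; omega
  rw [connected_iff]
  refine ⟨?_, hne⟩
  intro x y
  by_contra hxy
  set H := Gᶜ.induce Tset with hH
  set A : Finset Tset := Finset.univ.filter (fun v => H.Reachable x v) with hA
  set B : Finset Tset := Finset.univ.filter (fun v => ¬ H.Reachable x v) with hB
  set Av : Finset V := A.image Subtype.val with hAv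
  set Bv : Finset V := B.image Subtype.val with hBv
  have hmemA : ∀ v : Tset, v ∈ A ↔ H.Reachable x v := by intro v; simp only [hA, Finset.mem_filter, Finset.mem_univ, true_and]
  have hmemB : ∀ v : Tset, v ∈ B ↔ ¬ H.Reachable x v := by intro v; simp only [hB, Finset.mem_filter, Finset.mem_univ, true_and]
  -- no Gᶜ edges between A and B (in V)
  have noadjV : ∀ a ∈ Av, ∀ b ∈ Bv, ¬ Gᶜ.Adj a b := by
    rintro a ha b hb hadj
    obtain ⟨a', ha', rfl⟩ := Finset.mem_image.mp ha
    obtain ⟨b', hb', rfl⟩ := Finset.mem_image.mp hb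
    have hadj' : H.Adj a' b' := hadj
    exact (hmemB b').mp hb' (((hmemA a').mp ha').trans hadj'.reachable)
  have adjV : ∀ a ∈ Av, ∀ b ∈ Bv, G.Adj a b := by
    intro a ha b hb
    by_contra hng
    obtain ⟨a', ha', rfl⟩ := Finset.mem_image.mp ha
    obtain ⟨b', hb', rfl⟩ := Finset.mem_image.mp hb
    have hne' : (a' : V) ≠ (b' : V) := fun h =>
      (hmemB b').mp hb' (Subtype.ext h ▸ (hmemA a').mp ha')
    exact noadjV _ (Finset.mem_image_of_mem _ ha') _ (Finset.mem_image_of_mem _ hb')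
      ((G.compl_adj _ _).mpr ⟨hne', hng⟩)
  -- coverage
  have cover : ∀ v : V, v ∉ S → v ∈ Av ∨ v ∈ Bv := by
    intro v hv
    have hvT : v ∈ Tset := by simp [Tset, hv]
    by_cases hr : H.Reachable x ⟨v, hvT⟩
    · exact Or.inl (Finset.mem_image_of_mem _ ((hmemA _).mpr hr))
    · exact Or.inr (Finset.mem_image_of_mem _ ((hmemB _).mpr hr))
  -- cardinalities
  have hAvcard : Av.card = A.card := Finset.card_image_of_injective _ Subtype.val_injective
  have hBvcard : Bv.card = B.card := Finset.card_image_of_injective _ Subtype.val_injective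
  have hsum : Av.card + Bv.card = 2 * n - S.card := by
    rw [hAvcard, hBvcard, hA, hB,
      Finset.card_filter_add_card_filter_not, Finset.card_univ, hTfin, hcard]
  have hxA : (x : V) ∈ Av := Finset.mem_image_of_mem _ ((hmemA x).mpr (Reachable.refl x))
  have hyB : (y : V) ∈ Bv := Finset.mem_image_of_mem _ ((hmemB y).mpr hxy)
  have hApos : 1 ≤ Av.card := Finset.card_pos.mpr ⟨_, hxA⟩
  have hBpos : 1 ≤ Bv.card := Finset.card_pos.mpr ⟨_, hyB⟩
  -- degree contradiction for a singleton side
  have deg_contr : ∀ c : V, Gᶜ.neighborFinset c ⊆ S → False := by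
    intro c hsub
    have h2 : Gᶜ.degree c ≤ S.card := Finset.card_le_card hsub
    have := hδ c
    omega
  have singA : Av = {(x : V)} → False := by
    intro h1
    apply deg_contr x
    intro v hv
    rw [SimpleGraph.mem_neighborFinset] at hv
    by_contra hvS
    rcases cover v hvS with hvA | hvB
    · rw [h1, Finset.mem_singleton] at hvA
      subst hvA
      exact Gᶜ.irrefl hv
    · exact noadjV _ (h1 ▸ Finset.mem_singleton_self _) _ hvB hv
  have singB : Bv = {(y : V)} → False := by
    intro h1
    apply deg_contr y
    intro v hv
    rw [SimpleGraph.mem_neighborFinset] at hv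
    by_contra hvS
    rcases cover v hvS with hvA | hvB
    · exact noadjV _ hvA _ (h1 ▸ Finset.mem_singleton_self _) hv.symm
    · rw [h1, Finset.mem_singleton] at hvB
      subst hvB
      exact Gᶜ.irrefl hv
  by_cases hA2 : 2 ≤ Av.card
  · by_cases hB2 : 2 ≤ Bv.card
    · by_cases hAn : n ≤ Av.card
      · exact hG (aux_contains G n Bv Av (fun b hb a ha => (adjV a ha b hb).symm) hB2 hAn)
      · have hBn : n ≤ Bv.card := by omega
        exact hG (aux_contains G n Av Bv adjV hA2 hBn)
    · have hB1 : Bv.card = 1 := by omega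
      obtain ⟨c, hc⟩ := Finset.card_eq_one.mp hB1
      have : (y : V) = c := by
        have := hc ▸ hyB; exact Finset.mem_singleton.mp this
      exact singB (this ▸ hc)
  · have hA1 : Av.card = 1 := by omega
    obtain ⟨c, hc⟩ := Finset.card_eq_one.mp hA1
    have : (x : V) = c := by
      have := hc ▸ hxA; exact Finset.mem_singleton.mp this
    exact singA (this ▸ hc)
end

section
/- Let G be a graph on 2n vertices with no K_{2,n} subgraph whose complement Ḡ is bipartite, 2-connected, has minimum degree at least ⌈n/2⌉ + 250 and circumference at least 2n−4. Then Ḡ contains a cycle of every even length m with n+1 ≤ m ≤ 2n−4 (in particular, Ḡ cannot avoid C_m for even m in this range). -/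
open SimpleGraph

/-!
Since `Gᶜ` is bipartite with parts `A`, `B`, both parts are cliques of `G`; as `G` has no
`K_{2,n}`, this forces `|A|, |B| ≤ n + 1` (hence `≥ n - 1`), and any two vertices of `A` have at
most two common `Gᶜ`-non-neighbours in `B`. For `C_{2k}`, fix `k` vertices `u_0, …, u_{k-1}` of
`A` and use Hall's theorem to choose distinct `w_i ∈ B` adjacent to both `u_i` and `u_{i+1}`
(indices mod `k`); then `u_0 w_0 u_1 w_1 … u_{k-1} w_{k-1}` is the cycle. In Hall's condition for
an index set `I`, a small `I` is covered by a single common neighbourhood, which has at least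
`499` vertices. Otherwise a vertex of `B` missed by all of them is a `Gᶜ`-non-neighbour of at
least half of the `u_i, u_{i+1}` (`i ∈ I`): the degree bound rules this out when
`|I| ≥ n - 40`, and for smaller `I` double counting pairs against the codegree bound leaves at
most `40` missed vertices.
-/

open Finset

theorem hasCycleLength_of_periodic {V : Type*} {G : SimpleGraph V} {N : ℕ} (hN : 3 ≤ N)
    {f : ℕ → V} (hper : Function.Periodic f N) (hinj : Set.InjOn f (Set.Iio N))
    (hadj : ∀ j, G.Adj (f j) (f (j + 1))) : HasCycleLength G N := by
  obtain ⟨N, rfl⟩ : ∃ N', N = N' + 3 := ⟨N - 3, by omega⟩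
  have hsucc : ∀ i j : Fin (N + 3), i - j = 1 → G.Adj (f j) (f i) := by
    intro i j hij
    rw [sub_eq_iff_eq_add'.mp hij, Fin.val_add, Fin.val_one, hper.map_mod_nat]
    exact hadj j
  refine (cycleGraph_isContained_iff (by omega)).mp
    ⟨⟨⟨fun i => f i, fun {i j} h => ?_⟩, fun i j h => Fin.ext (hinj i.isLt j.isLt h)⟩⟩
  rcases cycleGraph_adj.mp h with h | h
  · exact (hsucc i j h).symm
  · exact hsucc j i h

open Fin.NatCast in
theorem hasCycleLength_two_mul_of_alternating {V : Type*} {G : SimpleGraph V} {k : ℕ} [NeZero k]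
    (hk : 2 ≤ k) {u w : Fin k → V} (hu : Function.Injective u) (hw : Function.Injective w)
    (huw : ∀ i j, u i ≠ w j) (hadj₁ : ∀ i, G.Adj (u i) (w i))
    (hadj₂ : ∀ i, G.Adj (w i) (u (i + 1))) : HasCycleLength G (2 * k) := by
  set f : ℕ → V := fun j =>
    if j % 2 = 0 then u ((j / 2 : ℕ) : Fin k) else w ((j / 2 : ℕ) : Fin k)
  have hcast : ∀ a b : ℕ, a < k → b < k → (a : Fin k) = (b : Fin k) → a = b :=
    fun a b ha hb h => by
    simpa [Fin.ext_iff, Fin.val_natCast, Nat.mod_eq_of_lt ha, Nat.mod_eq_of_lt hb] using h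
  refine hasCycleLength_of_periodic (by omega) (f := f) (fun j => ?_) (fun i hi j hj h => ?_)
    (fun j => ?_)
  · have hpar : (j + 2 * k) % 2 = j % 2 := by omega
    have hhalf : (j + 2 * k) / 2 = j / 2 + k := by omega
    simp only [f, hpar, hhalf, Nat.cast_add, Fin.natCast_self, add_zero]
  · simp only [Set.mem_Iio] at hi hj
    simp only [f] at h
    split_ifs at h with hi2 hj2 hj2
    · have := hcast _ _ (by omega) (by omega) (hu h); omega
    · exact absurd h (huw _ _)
    · exact absurd h.symm (huw _ _)
    · have := hcast _ _ (by omega) (by omega) (hw h); omega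
  · rcases Nat.mod_two_eq_zero_or_one j with hj | hj
    · have hhalf : (j + 1) / 2 = j / 2 := by omega
      simpa [f, hj, hhalf, Nat.add_mod] using hadj₁ ((j / 2 : ℕ) : Fin k)
    · have hhalf : (j + 1) / 2 = j / 2 + 1 := by omega
      simpa [f, hj, hhalf, Nat.add_mod] using hadj₂ ((j / 2 : ℕ) : Fin k)

section CompleteBipartite

variable {V : Type*} {G : SimpleGraph V} {n : ℕ}

theorem contains_completeBipartiteGraph_of_commonNeighbors {x y : V} (hxy : x ≠ y)
    {T : Finset V} (hT : n ≤ #T) (hadj : ∀ z ∈ T, G.Adj x z ∧ G.Adj y z) :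
    Contains G (completeBipartiteGraph (Fin 2) (Fin n)) := by
  obtain ⟨e⟩ : Nonempty (Fin n ↪ T) :=
    Function.Embedding.nonempty_of_card_le (by simpa using hT)
  have hpair : Function.Injective ![x, y] := by
    intro i j h
    fin_cases i <;> fin_cases j <;> simp_all [eq_comm]
  refine ⟨⟨Sum.elim ![x, y] (fun j => e j), ?_⟩,
    hpair.sumElim (Subtype.val_injective.comp e.injective) fun i j h => ?_⟩
  · rintro (i | j) (i' | j') h <;> simp only [completeBipartiteGraph_adj, Sum.isLeft_inl,
      Sum.isRight_inl, Sum.isLeft_inr, Sum.isRight_inr] at h <;> simp at h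
    · fin_cases i <;> simp [(hadj _ (e j').2)]
    · fin_cases i' <;> simp [(hadj _ (e j).2).1.symm, (hadj _ (e j).2).2.symm]
  · have hxT : x ∉ T := fun hx => (hadj x hx).1.ne rfl
    have hyT : y ∉ T := fun hy => (hadj y hy).2.ne rfl
    fin_cases i <;> simp only [Fin.zero_eta, Fin.mk_one, Matrix.cons_val_zero,
      Matrix.cons_val_one] at h
    · exact hxT (h ▸ (e j).2)
    · exact hyT (h ▸ (e j).2)

variable [DecidableEq V]

theorem card_add_card_le_of_isClique (hG : ¬ Contains G (completeBipartiteGraph (Fin 2) (Fin n)))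
    {s t : Finset V} (hs : G.IsClique (s : Set V)) (hst : Disjoint s t) {x y : V} (hx : x ∈ s)
    (hy : y ∈ s) (hxy : x ≠ y) (ht : ∀ z ∈ t, G.Adj x z ∧ G.Adj y z) :
    #s + #t ≤ n + 1 := by
  by_contra! hcard
  refine hG (contains_completeBipartiteGraph_of_commonNeighbors hxy (T := s \ {x, y} ∪ t) ?_ ?_)
  · have hsub : {x, y} ⊆ s := by simp [Finset.insert_subset_iff, hx, hy]
    rw [card_union_of_disjoint (hst.mono_left sdiff_subset), card_sdiff_of_subset hsub,
      card_pair hxy]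
    omega
  · intro z hz
    rcases mem_union.mp hz with hz | hz
    · obtain ⟨hzs, hz⟩ := mem_sdiff.mp hz
      simp only [mem_insert, mem_singleton, not_or] at hz
      exact ⟨hs hx hzs (Ne.symm hz.1), hs hy hzs (Ne.symm hz.2)⟩
    · exact ht z hz

theorem card_le_of_isClique (hG : ¬ Contains G (completeBipartiteGraph (Fin 2) (Fin n)))
    {s : Finset V} (hs : G.IsClique (s : Set V)) : #s ≤ n + 1 := by
  rcases le_or_gt #s 1 with h | h
  · omega
  obtain ⟨x, hx, y, hy, hxy⟩ := one_lt_card.mp h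
  simpa using card_add_card_le_of_isClique hG hs (disjoint_empty_right s) hx hy hxy (by simp)

theorem card_filter_not_adj_compl_le_two [DecidableRel G.Adj]
    (hG : ¬ Contains G (completeBipartiteGraph (Fin 2) (Fin n))) {A B : Finset V}
    (hA : G.IsClique (A : Set V)) (hAB : Disjoint A B) (hAn : n ≤ #A + 1) {x y : V} (hx : x ∈ A)
    (hy : y ∈ A) (hxy : x ≠ y) : #{z ∈ B | ¬Gᶜ.Adj x z ∧ ¬Gᶜ.Adj y z} ≤ 2 := by
  have hadj : ∀ v ∈ A, ∀ z ∈ B, ¬Gᶜ.Adj v z → G.Adj v z := fun v hv z hz h =>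
    not_not.mp fun h' =>
      h ((compl_adj G v z).mpr ⟨fun e => disjoint_left.mp hAB hv (e ▸ hz), h'⟩)
  have := card_add_card_le_of_isClique hG hA (hAB.mono_right (filter_subset _ B)) hx hy hxy
    fun z (hz : z ∈ {z ∈ B | ¬Gᶜ.Adj x z ∧ ¬Gᶜ.Adj y z}) =>
      ⟨hadj x hx z (mem_filter.mp hz).1 (mem_filter.mp hz).2.1,
        hadj y hy z (mem_filter.mp hz).1 (mem_filter.mp hz).2.2⟩
  omega

end CompleteBipartite

theorem isClique_of_compl_coloring_eq {V α : Type*} {G : SimpleGraph V} (C : Gᶜ.Coloring α)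
    {s : Set V} (hs : ∀ x ∈ s, ∀ y ∈ s, C x = C y) : G.IsClique s := by
  intro x hx y hy hxy
  by_contra h
  exact C.valid ((compl_adj G x y).mpr ⟨hxy, h⟩) (hs x hx y hy)

theorem card_le_two_mul_card_filter_union_image {ι α : Type*} [DecidableEq α] {I : Finset ι}
    {f g : ι → α} (hf : Function.Injective f) (hg : Function.Injective g) (P : α → Prop)
    [DecidablePred P] (h : ∀ i ∈ I, P (f i) ∨ P (g i)) :
    #I ≤ 2 * #{a ∈ I.image f ∪ I.image g | P a} := by
  classical
  have hf' : #{i ∈ I | P (f i)} ≤ #{a ∈ I.image f ∪ I.image g | P a} :=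
    card_le_card_of_injOn f (fun i hi => by
      obtain ⟨hi, hP⟩ := mem_filter.mp (mem_coe.mp hi)
      exact mem_filter.mpr ⟨mem_union_left _ (mem_image_of_mem f hi), hP⟩) hf.injOn
  have hg' : #{i ∈ I | P (g i)} ≤ #{a ∈ I.image f ∪ I.image g | P a} :=
    card_le_card_of_injOn g (fun i hi => by
      obtain ⟨hi, hP⟩ := mem_filter.mp (mem_coe.mp hi)
      exact mem_filter.mpr ⟨mem_union_right _ (mem_image_of_mem g hi), hP⟩) hg.injOn
  calc #I = #({i ∈ I | P (f i)} ∪ {i ∈ I | P (g i)}) := by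
        rw [← filter_or, filter_true_of_mem h]
    _ ≤ #{i ∈ I | P (f i)} + #{i ∈ I | P (g i)} := card_union_le _ _
    _ ≤ 2 * #{a ∈ I.image f ∪ I.image g | P a} := by omega

theorem card_mul_choose_two_le {α β : Type*} [DecidableEq β] {W : Finset α} {U : Finset β}
    {M : α → Finset β} {h c : ℕ} (hMU : ∀ w ∈ W, M w ⊆ U)
    (hM : ∀ w ∈ W, h ≤ #(M w))
    (hpair : ∀ x ∈ U, ∀ y ∈ U, x ≠ y → #{w ∈ W | x ∈ M w ∧ y ∈ M w} ≤ c) :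
    #W * h.choose 2 ≤ c * (#U).choose 2 := by
  rw [mul_comm c, ← card_powersetCard]
  refine card_mul_le_card_mul (fun w p => p ⊆ M w) (fun w hw => ?_) (fun p hp => ?_)
  · calc h.choose 2 ≤ (#(M w)).choose 2 := Nat.choose_le_choose 2 (hM w hw)
      _ = #((M w).powersetCard 2) := (card_powersetCard 2 _).symm
      _ ≤ _ := card_le_card fun p hp => by
          obtain ⟨hpM, hp2⟩ := mem_powersetCard.mp hp
          exact mem_filter.mpr ⟨mem_powersetCard.mpr ⟨hpM.trans (hMU w hw), hp2⟩, hpM⟩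
  · obtain ⟨hpU, hp2⟩ := mem_powersetCard.mp hp
    obtain ⟨x, y, hxy, rfl⟩ := card_eq_two.mp hp2
    simpa [bipartiteBelow, insert_subset_iff] using
      hpair x (hpU (by simp)) y (hpU (by simp)) hxy

theorem two_mul_choose_two_four_mul_lt {h : ℕ} (hh : 4 ≤ h) :
    2 * (4 * h).choose 2 < 41 * h.choose 2 := by
  have : (4 : ℚ) ≤ h := by exact_mod_cast hh
  qify
  rw [Nat.cast_choose_two, Nat.cast_choose_two]
  push_cast
  nlinarith

section Bipartite

variable {V : Type*} [Fintype V] [DecidableEq V] {H : SimpleGraph V} [DecidableRel H.Adj]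
  {A B : Finset V} {n k : ℕ}

section Succ

variable [NeZero k]

variable (H) in
def succCommonNeighbors (u : Fin k → V) (i : Fin k) : Finset V :=
  H.neighborFinset (u i) ∩ H.neighborFinset (u (i + 1))

variable {u : Fin k → V}

theorem card_succCommonNeighbors_ge (hA : ∀ x ∈ A, H.neighborFinset x ⊆ B) (hB : #B ≤ n + 1)
    (hδ : ∀ v, (n + 1) / 2 + 250 ≤ H.degree v) (huA : ∀ i, u i ∈ A) (i : Fin k) :
    499 ≤ #(succCommonNeighbors H u i) := by
  have hunion := card_le_card (union_subset (hA _ (huA i)) (hA _ (huA (i + 1))))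
  have := card_inter_add_card_union (H.neighborFinset (u i)) (H.neighborFinset (u (i + 1)))
  have := hδ (u i)
  have := hδ (u (i + 1))
  rw [← card_neighborFinset_eq_degree] at *
  unfold succCommonNeighbors
  omega

theorem card_le_two_mul_card_filter_not_adj (hu : Function.Injective u) {I : Finset (Fin k)} {w : V}
    (hw : w ∉ I.biUnion (succCommonNeighbors H u)) :
    #I ≤ 2 * #{x ∈ I.image u ∪ I.image (fun i => u (i + 1)) | ¬H.Adj x w} := by
  refine card_le_two_mul_card_filter_union_image hu (hu.comp (add_left_injective 1)) _
    fun i hi => ?_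
  by_contra! hadj
  exact hw (mem_biUnion.mpr ⟨i, hi, mem_inter.mpr
    ⟨(mem_neighborFinset _ _ _).mpr hadj.1, (mem_neighborFinset _ _ _).mpr hadj.2⟩⟩)

theorem card_sdiff_biUnion_succCommonNeighbors_le
    (hco : ∀ x ∈ A, ∀ y ∈ A, x ≠ y → #{z ∈ B | ¬H.Adj x z ∧ ¬H.Adj y z} ≤ 2)
    (hu : Function.Injective u) (huA : ∀ i, u i ∈ A) {I : Finset (Fin k)} (hI : 8 ≤ #I) :
    #(B \ I.biUnion (succCommonNeighbors H u)) ≤ 40 := by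
  set U := I.image u ∪ I.image (fun i => u (i + 1))
  have hUA : ∀ x ∈ U, x ∈ A := by
    intro x hx
    obtain ⟨i, -, rfl⟩ | ⟨i, -, rfl⟩ := by simpa [U, mem_union, mem_image] using hx
    exacts [huA i, huA (i + 1)]
  by_contra! hW
  obtain ⟨W, hWsub, hWcard⟩ := exists_subset_card_eq hW
  have hM : ∀ w ∈ W, (#I + 1) / 2 ≤ #{x ∈ U | ¬H.Adj x w} := fun w hw => by
    have : #I ≤ 2 * #{x ∈ U | ¬H.Adj x w} :=
      card_le_two_mul_card_filter_not_adj hu (mem_sdiff.mp (hWsub hw)).2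
    omega
  have hpair : ∀ x ∈ U, ∀ y ∈ U, x ≠ y →
      #{w ∈ W | x ∈ {x ∈ U | ¬H.Adj x w} ∧ y ∈ {x ∈ U | ¬H.Adj x w}} ≤ 2 := by
    refine fun x hx y hy hxy =>
      (card_le_card fun w hw => ?_).trans (hco x (hUA x hx) y (hUA y hy) hxy)
    simp only [mem_filter] at hw ⊢
    exact ⟨(mem_sdiff.mp (hWsub hw.1)).1, hw.2.1.2, hw.2.2.2⟩
  have hU : #U ≤ 4 * ((#I + 1) / 2) := by
    have : #U ≤ #(I.image u) + #(I.image fun i => u (i + 1)) := card_union_le _ _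
    have := card_image_le (s := I) (f := u)
    have := card_image_le (s := I) (f := fun i => u (i + 1))
    omega
  have hcount := card_mul_choose_two_le (fun w _ => filter_subset _ U) hM hpair
  rw [hWcard] at hcount
  have hchoose := Nat.choose_le_choose 2 hU
  have hlt := two_mul_choose_two_four_mul_lt (show 4 ≤ (#I + 1) / 2 by omega)
  omega

theorem subset_biUnion_succCommonNeighbors (hB : ∀ w ∈ B, H.neighborFinset w ⊆ A)
    (hA : #A ≤ n + 1) (hδ : ∀ v, (n + 1) / 2 + 250 ≤ H.degree v) (hu : Function.Injective u)
    (huA : ∀ i, u i ∈ A) {I : Finset (Fin k)} (hI : n ≤ #I + 40) :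
    B ⊆ I.biUnion (succCommonNeighbors H u) := by
  intro w hw
  by_contra hmiss
  have hnonadj := card_le_two_mul_card_filter_not_adj hu hmiss
  have hsub : {x ∈ I.image u ∪ I.image (fun i => u (i + 1)) | ¬H.Adj x w} ⊆
      A \ H.neighborFinset w := by
    intro x hx
    obtain ⟨hxU, hxw⟩ := mem_filter.mp hx
    refine mem_sdiff.mpr ⟨?_, fun h => hxw ((mem_neighborFinset _ _ _).mp h).symm⟩
    obtain ⟨i, -, rfl⟩ | ⟨i, -, rfl⟩ := by simpa [mem_union, mem_image] using hxU
    exacts [huA i, huA (i + 1)]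
  have := card_le_card hsub
  have := card_le_card (hB w hw)
  rw [card_sdiff_of_subset (hB w hw), card_neighborFinset_eq_degree] at *
  have := hδ w
  omega

theorem card_le_card_biUnion_succCommonNeighbors
    (hA : ∀ x ∈ A, H.neighborFinset x ⊆ B) (hB : ∀ w ∈ B, H.neighborFinset w ⊆ A)
    (hAcard : #A ≤ n + 1) (hBcard : #B ≤ n + 1) (hBcard' : n ≤ #B + 1)
    (hδ : ∀ v, (n + 1) / 2 + 250 ≤ H.degree v)
    (hco : ∀ x ∈ A, ∀ y ∈ A, x ≠ y → #{z ∈ B | ¬H.Adj x z ∧ ¬H.Adj y z} ≤ 2)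
    (hkn : k + 1 ≤ n) (hu : Function.Injective u) (huA : ∀ i, u i ∈ A) (I : Finset (Fin k)) :
    #I ≤ #(I.biUnion (succCommonNeighbors H u)) := by
  have hIk : #I ≤ k := card_le_univ I |>.trans (Fintype.card_fin k).le
  rcases lt_or_ge #I 500 with hsmall | hlarge
  · obtain rfl | ⟨i, hi⟩ := I.eq_empty_or_nonempty
    · simp
    have := card_succCommonNeighbors_ge hA hBcard hδ huA i
    have := card_le_card (subset_biUnion_of_mem (succCommonNeighbors H u) hi)
    omega
  rcases le_or_gt n (#I + 40) with hbig | hmid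
  · have := card_le_card (subset_biUnion_succCommonNeighbors hB hAcard hδ hu huA hbig)
    omega
  · have := card_sdiff_biUnion_succCommonNeighbors_le (B := B) (I := I) hco hu huA (by omega)
    have := card_le_card_sdiff_add_card (s := B) (t := I.biUnion (succCommonNeighbors H u))
    omega

end Succ

theorem hasCycleLength_two_mul (hAB : Disjoint A B) (hA : ∀ x ∈ A, H.neighborFinset x ⊆ B)
    (hB : ∀ w ∈ B, H.neighborFinset w ⊆ A) (hAcard : #A ≤ n + 1) (hAcard' : n ≤ #A + 1)
    (hBcard : #B ≤ n + 1) (hBcard' : n ≤ #B + 1) (hδ : ∀ v, (n + 1) / 2 + 250 ≤ H.degree v)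
    (hco : ∀ x ∈ A, ∀ y ∈ A, x ≠ y → #{z ∈ B | ¬H.Adj x z ∧ ¬H.Adj y z} ≤ 2)
    (hk : 2 ≤ k) (hkn : k + 1 ≤ n) : HasCycleLength H (2 * k) := by
  have : NeZero k := ⟨by omega⟩
  obtain ⟨e⟩ : Nonempty (Fin k ↪ A) := Function.Embedding.nonempty_of_card_le <| by
    simp only [Fintype.card_fin, Fintype.card_coe]
    omega
  set u : Fin k → V := fun i => e i
  have hu : Function.Injective u := Subtype.val_injective.comp e.injective
  have huA : ∀ i, u i ∈ A := fun i => (e i).2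
  obtain ⟨w, hw, hwS⟩ := (all_card_le_biUnion_card_iff_exists_injective _).mp
    (card_le_card_biUnion_succCommonNeighbors hA hB hAcard hBcard hBcard' hδ hco hkn hu huA)
  simp only [succCommonNeighbors, mem_inter, mem_neighborFinset] at hwS
  refine hasCycleLength_two_mul_of_alternating hk hu hw (fun i j h => ?_) (fun i => (hwS i).1)
    (fun i => (hwS i).2.symm)
  have hwB : w j ∈ B := hA _ (huA j) ((mem_neighborFinset _ _ _).mpr (hwS j).1)
  exact disjoint_left.mp hAB (huA i) (h ▸ hwB)

end Bipartite

theorem stmt_14_general {V : Type*} [Fintype V] [DecidableEq V] (G : SimpleGraph V) [DecidableRel G.Adj]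
    (n : ℕ) (hcard : Fintype.card V = 2 * n)
    (hG : ¬ Contains G (completeBipartiteGraph (Fin 2) (Fin n)))
    (hbip : Gᶜ.Colorable 2)
    (hδ : ∀ v, (n + 1) / 2 + 250 ≤ Gᶜ.degree v) :
    ∀ m, Even m → n + 1 ≤ m → m ≤ 2 * n - 4 → HasCycleLength Gᶜ m := by
  rintro m ⟨k, rfl⟩ hm hm'
  obtain ⟨C⟩ := hbip
  set A : Finset V := {v | C v = 0}
  set B : Finset V := {v | C v ≠ 0}
  have hmemA : ∀ v, v ∈ A ↔ C v = 0 := by simp [A]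
  have hmemB : ∀ v, v ∈ B ↔ C v = 1 := fun v => by
    simp only [B, mem_filter, mem_univ, true_and]
    omega
  have hAB : Disjoint A B := disjoint_filter_filter_not _ _ _
  have hsum : #A + #B = 2 * n := by rw [card_filter_add_card_filter_not, card_univ, hcard]
  have hA : G.IsClique (A : Set V) :=
    isClique_of_compl_coloring_eq C fun x hx y hy => by simp_all only [mem_coe]
  have hB : G.IsClique (B : Set V) :=
    isClique_of_compl_coloring_eq C fun x hx y hy => by simp_all only [mem_coe]
  have hAcard := card_le_of_isClique hG hA
  have hBcard := card_le_of_isClique hG hB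
  have hnbr : ∀ x z, Gᶜ.Adj x z → (x ∈ A ↔ z ∈ B) := fun x z h => by
    have := C.valid h
    rw [hmemA, hmemB]
    omega
  rw [← two_mul]
  refine hasCycleLength_two_mul hAB
    (fun x hx z hz => (hnbr x z ((mem_neighborFinset _ _ _).mp hz)).mp hx)
    (fun w hw z hz => (hnbr z w ((mem_neighborFinset _ _ _).mp hz).symm).mpr hw)
    hAcard (by omega) hBcard (by omega) hδ
    (fun x hx y hy hxy => card_filter_not_adj_compl_le_two hG hA hAB (by omega) hx hy hxy)
    (by omega) (by omega)

theorem stmt_14 {V : Type*} [Fintype V] [DecidableEq V] (G : SimpleGraph V) [DecidableRel G.Adj]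
    (n : ℕ) (hcard : Fintype.card V = 2 * n)
    (hG : ¬ Contains G (completeBipartiteGraph (Fin 2) (Fin n)))
    (hbip : Gᶜ.Colorable 2) (h2 : IsKConnected 2 Gᶜ)
    (hδ : ∀ v, (n + 1) / 2 + 250 ≤ Gᶜ.degree v)
    (hcirc : 2 * n - 4 ≤ circumference Gᶜ) :
    ∀ m, Even m → n + 1 ≤ m → m ≤ 2 * n - 4 → HasCycleLength Gᶜ m :=
  stmt_14_general G n hcard hG hbip hδ
end
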